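/- For symmetric positive-definite matrices P₁, P₂ ∈ 𝒫 (determinant one), defining exp_{P₁}(V) = √(P₁ e^{2P₁⁻¹V} P₁) for V with P₁⁻¹V traceless symmetric, and exp⁻¹_{P₁}(P₂) = P₁ log(√(P₁⁻¹ P₂² P₁⁻¹)), one has exp_{P₁}(exp⁻¹_{P₁}(P₂)) = P₂. -/

import Mathlib

open Matrix

/-- The (total) symmetric positive-semidefinite square root of a matrix. -/
noncomputable def sqrtm {n : ℕ} (A : Matrix (Fin n) (Fin n) ℝ) : Matrix (Fin n) (Fin n) ℝ :=
  letI := Classical.dec A.PosSemidef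
  if h : A.PosSemidef then
    h.1.eigenvectorUnitary.1 * diagonal ((↑) ∘ Real.sqrt ∘ h.1.eigenvalues) *
      (star h.1.eigenvectorUnitary : Matrix (Fin n) (Fin n) ℝ)
  else 0

/-!
The inner exponent is `2 • L`, and `e^{2L} = (e^L)² = P₁⁻¹ P₂² P₁⁻¹` because `e^L` is the
square root of that positive-semidefinite matrix. Conjugating by `P₁` leaves `P₂²` under the
outer square root, and the positive square root of `P₂²` is `P₂`.
-/

section sqrtm

variable {n : ℕ} {A : Matrix (Fin n) (Fin n) ℝ}

theorem sqrtm_eq_cfc (hA : A.PosSemidef) : sqrtm A = cfc Real.sqrt A := by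
  rw [sqrtm, dif_pos hA, hA.1.cfc_eq]
  rfl

theorem sqrtm_mul_self (hA : A.PosSemidef) : sqrtm A * sqrtm A = A := by
  have hspec := (posSemidef_iff_isHermitian_and_spectrum_nonneg.mp hA).2
  have : IsSelfAdjoint A := hA.1
  rw [sqrtm_eq_cfc hA, ← cfc_mul Real.sqrt Real.sqrt A]
  conv_rhs => rw [← cfc_id ℝ A]
  exact cfc_congr fun x hx => Real.mul_self_sqrt (hspec hx)

theorem sqrtm_sq (hA : A.PosSemidef) : sqrtm (A ^ 2) = A := by
  have hspec := (posSemidef_iff_isHermitian_and_spectrum_nonneg.mp hA).2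
  have : IsSelfAdjoint A := hA.1
  rw [sqrtm_eq_cfc (hA.pow 2), ← cfc_comp_pow Real.sqrt 2 A]
  conv_rhs => rw [← cfc_id ℝ A]
  exact cfc_congr fun x hx => Real.sqrt_sq (hspec hx)

end sqrtm

theorem Matrix.exp_two_smul {m 𝕜 : Type*} [Fintype m] [DecidableEq m] [RCLike 𝕜]
    (A : Matrix m m 𝕜) :
    NormedSpace.exp ((2 : 𝕜) • A) = NormedSpace.exp A * NormedSpace.exp A := by
  rw [two_smul, exp_add_of_commute A A (Commute.refl A)]

theorem Matrix.PosSemidef.inv_mul_mul_inv {m : Type*} [Fintype m] [DecidableEq m]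
    {P X : Matrix m m ℝ} (hX : X.PosSemidef) (hP : P.IsHermitian) :
    (P⁻¹ * X * P⁻¹).PosSemidef := by
  simpa only [conjTranspose_nonsing_inv, hP.eq] using hX.mul_mul_conjTranspose_same P⁻¹

theorem Matrix.mul_inv_mul_mul_inv_mul {m α : Type*} [Fintype m] [DecidableEq m] [CommRing α]
    {P : Matrix m m α} (hP : IsUnit P.det) (X : Matrix m m α) :
    P * (P⁻¹ * X * P⁻¹) * P = X := by
  rw [mul_assoc P⁻¹, mul_nonsing_inv_cancel_left P _ hP, nonsing_inv_mul_cancel_right P X hP]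

theorem exp_inv_exp_general (n : ℕ) (P₁ P₂ L : Matrix (Fin n) (Fin n) ℝ)
    (h₁ : P₁.PosDef) (h₂ : P₂.PosDef)
    (hLexp : NormedSpace.exp L = sqrtm (P₁⁻¹ * P₂ ^ 2 * P₁⁻¹)) :
    sqrtm (P₁ * NormedSpace.exp ((2 : ℝ) • (P₁⁻¹ * (P₁ * L))) * P₁) = P₂ := by
  have hdet : IsUnit P₁.det := (isUnit_iff_isUnit_det P₁).mp h₁.isUnit
  have hB : (P₁⁻¹ * P₂ ^ 2 * P₁⁻¹).PosSemidef :=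
    (h₂.posSemidef.pow 2).inv_mul_mul_inv h₁.isHermitian
  rw [nonsing_inv_mul_cancel_left P₁ L hdet, exp_two_smul, hLexp, sqrtm_mul_self hB,
    mul_inv_mul_mul_inv_mul hdet, sqrtm_sq h₂.posSemidef]

/-- For `P₁, P₂ ∈ 𝒫`, with `exp_{P₁}(V) = √(P₁ e^{2 P₁⁻¹ V} P₁)` and
`exp⁻¹_{P₁}(P₂) = P₁ log √(P₁⁻¹ P₂² P₁⁻¹)`, one has `exp_{P₁}(exp⁻¹_{P₁}(P₂)) = P₂`.
The matrix logarithm is represented by the symmetric matrix `L` with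
`e^L = √(P₁⁻¹ P₂² P₁⁻¹)`. -/
theorem exp_inv_exp (n : ℕ) (P₁ P₂ L : Matrix (Fin n) (Fin n) ℝ)
    (h₁ : P₁.PosDef) (h₁d : P₁.det = 1) (h₂ : P₂.PosDef) (h₂d : P₂.det = 1)
    (hL : Lᵀ = L)
    (hLexp : NormedSpace.exp L = sqrtm (P₁⁻¹ * P₂ ^ 2 * P₁⁻¹)) :
    sqrtm (P₁ * NormedSpace.exp ((2 : ℝ) • (P₁⁻¹ * (P₁ * L))) * P₁) = P₂ :=
  exp_inv_exp_general n P₁ P₂ L h₁ h₂ hLexp
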